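/- arXiv:hep-th/0602274 — 3 statements merged into one kernel-verified Lean document; each statement's English description precedes it below -/
import Mathlib

section
/- Let β and m be real numbers and z a real variable. Define ζ(z) = z³ − 3·4^{−1/3}·m·z and Q(z) = β·(4^{1/3}·z⁵ − 5·m·z³ + 5·4^{−1/3}·m²·z). Then for every real z the pair (ζ(z), Q(z)) satisfies the algebraic equation Q³ − (3/4)·β²·m⁵·Q = β³·(4ζ⁵ − 5·m³·ζ³ + (5/4)·m⁶·ζ). -/
/-!
For `m > 0`, after rescaling `z`, `ζ` and `Q / β` by powers of `√m`, the two parametrizations become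
the Chebyshev polynomials `T₃` and `T₅` and the curve becomes `T₃(Q) ∝ T₅(ζ)`, which holds because
`T₃ ∘ T₅ = T₅ ∘ T₃`. Without square roots: with `c = 4^{1/3}`, so `4^{-1/3} = c² / 4`, the claim is a
polynomial identity in `β, m, z, c` modulo `c³ = 4`.
-/

namespace Real

theorem rpow_one_div_three_pow_three {x : ℝ} (hx : 0 ≤ x) : (x ^ ((1 : ℝ) / 3)) ^ 3 = x := by
  rw [one_div]
  exact_mod_cast rpow_inv_natCast_pow hx three_ne_zero

theorem rpow_neg_one_div_three {x : ℝ} (hx : 0 < x) :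
    x ^ (-(1 : ℝ) / 3) = (x ^ ((1 : ℝ) / 3)) ^ 2 / x := by
  rw [eq_div_iff hx.ne', ← rpow_natCast, ← rpow_mul hx.le, ← rpow_add_one hx.ne']
  norm_num

end Real

theorem curve_three_five_identity {K : Type*} [Field K] [CharZero K] (β m z c : K)
    (hc : c ^ 3 = 4) :
    (β * (c * z ^ 5 - 5 * m * z ^ 3 + 5 * (c ^ 2 / 4) * m ^ 2 * z)) ^ 3
        - (3 / 4) * β ^ 2 * m ^ 5 * (β * (c * z ^ 5 - 5 * m * z ^ 3 + 5 * (c ^ 2 / 4) * m ^ 2 * z))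
      = β ^ 3 * (4 * (z ^ 3 - 3 * (c ^ 2 / 4) * m * z) ^ 5
        - 5 * m ^ 3 * (z ^ 3 - 3 * (c ^ 2 / 4) * m * z) ^ 3
        + (5 / 4) * m ^ 6 * (z ^ 3 - 3 * (c ^ 2 / 4) * m * z)) := by
  linear_combination (β ^ 3 * (z ^ 15 + 30 * m ^ 3 * z ^ 9 - (5/8) * m ^ 6 * z ^ 3
    - (75/4) * c * m ^ 2 * z ^ 11 + (3/16) * c * m ^ 5 * z ^ 5
    - (165/8) * c ^ 2 * m ^ 4 * z ^ 7 + (135/8) * c ^ 3 * m ^ 3 * z ^ 9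
    - (5/32) * c ^ 3 * m ^ 6 * z ^ 3 + (243/64) * c ^ 4 * m ^ 5 * z ^ 5
    - (405/64) * c ^ 5 * m ^ 4 * z ^ 7 + (243/256) * c ^ 7 * m ^ 5 * z ^ 5)) * hc

/-- For real `β`, `m`, and every real `z`, the pair
`ζ(z) = z³ − 3·4^{−1/3}·m·z`, `Q(z) = β(4^{1/3} z⁵ − 5 m z³ + 5·4^{−1/3} m² z)` satisfies the
`(3,5)` conformal-background algebraic curve
`Q³ − (3/4)β² m⁵ Q = β³ (4ζ⁵ − 5 m³ ζ³ + (5/4) m⁶ ζ)`. -/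
theorem curve_three_five_uniformization (β m z : ℝ) :
    let ζ : ℝ := z ^ 3 - 3 * (4 : ℝ) ^ (-(1 : ℝ) / 3) * m * z
    let Q : ℝ := β * ((4 : ℝ) ^ ((1 : ℝ) / 3) * z ^ 5 - 5 * m * z ^ 3
      + 5 * (4 : ℝ) ^ (-(1 : ℝ) / 3) * m ^ 2 * z)
    Q ^ 3 - (3 / 4) * β ^ 2 * m ^ 5 * Q
      = β ^ 3 * (4 * ζ ^ 5 - 5 * m ^ 3 * ζ ^ 3 + (5 / 4) * m ^ 6 * ζ) := by
  intro ζ Q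
  simp only [ζ, Q]
  rw [Real.rpow_neg_one_div_three four_pos]
  exact curve_three_five_identity β m z _ (Real.rpow_one_div_three_pow_three zero_le_four)
end

section
/- Let p, q be positive integers, μ > 0 and β ≠ 0 real numbers. For real ζ ≥ √μ define the conformal-background disk amplitude Q_0(ζ) = (β/2)·[ (ζ + √(ζ²−μ))^{q/p} + (ζ − √(ζ²−μ))^{q/p} ], where the exponent q/p is a real power (both bases are nonnegative for ζ ≥ √μ). Then for every ζ ≥ √μ, T_p( Q_0(ζ) / (β·μ^{q/(2p)}) ) = T_q( ζ / √μ ), where T_n denotes the Chebyshev polynomial of the first kind. -/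
open Real Polynomial

/-!
Put `ζ = √μ cosh θ` with `θ = arcosh (ζ / √μ) ≥ 0`. Then `ζ ± √(ζ² - μ) = √μ e^{±θ}`, so the
normalised amplitude is `cosh ((q / p) θ)`, and both sides equal `cosh (q θ)` because
`T_n (cosh t) = cosh (n t)`.
-/

namespace Real

lemma sqrt_sq_sub_eq_sqrt_mul_sqrt_div_sq_sub_one {μ : ℝ} (hμ : 0 < μ) (ζ : ℝ) :
    √(ζ ^ 2 - μ) = √μ * √((ζ / √μ) ^ 2 - 1) := by
  rw [← sqrt_mul hμ.le, div_pow, sq_sqrt hμ.le, mul_sub, mul_div_cancel₀ _ hμ.ne', mul_one]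

lemma add_sqrt_sq_sub_eq_sqrt_mul_exp_arcosh {μ ζ : ℝ} (hμ : 0 < μ) (hζ : √μ ≤ ζ) :
    ζ + √(ζ ^ 2 - μ) = √μ * exp (arcosh (ζ / √μ)) := by
  have hsμ : 0 < √μ := sqrt_pos.mpr hμ
  rw [exp_arcosh ((one_le_div hsμ).mpr hζ), sqrt_sq_sub_eq_sqrt_mul_sqrt_div_sq_sub_one hμ,
    mul_add, mul_div_cancel₀ _ hsμ.ne']

lemma sub_sqrt_sq_sub_eq_sqrt_mul_exp_neg_arcosh {μ ζ : ℝ} (hμ : 0 < μ) (hζ : √μ ≤ ζ) :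
    ζ - √(ζ ^ 2 - μ) = √μ * exp (-arcosh (ζ / √μ)) := by
  have hsμ : 0 < √μ := sqrt_pos.mpr hμ
  have hx : 1 ≤ ζ / √μ := (one_le_div hsμ).mpr hζ
  rw [exp_neg, exp_arcosh hx, add_sqrt_self_sq_sub_one_inv hx,
    sqrt_sq_sub_eq_sqrt_mul_sqrt_div_sq_sub_one hμ, mul_sub, mul_div_cancel₀ _ hsμ.ne']

lemma sqrt_mul_exp_rpow {μ : ℝ} (hμ : 0 ≤ μ) (t r : ℝ) :
    (√μ * exp t) ^ r = μ ^ (r / 2) * exp (r * t) := by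
  rw [mul_rpow (sqrt_nonneg μ) (exp_pos t).le, sqrt_eq_rpow, ← rpow_mul hμ, ← exp_mul,
    mul_comm t, one_div_mul_eq_div]

end Real

namespace Polynomial.Chebyshev

lemma T_real_eval_cosh_div_mul (p q : ℤ) (hp : p ≠ 0) (θ : ℝ) :
    (T ℝ p).eval (cosh ((q / p : ℝ) * θ)) = (T ℝ q).eval (cosh θ) := by
  rw [T_real_cosh, T_real_cosh, ← mul_assoc, mul_div_cancel₀ _ (Int.cast_ne_zero.mpr hp)]

end Polynomial.Chebyshev

theorem disk_amplitude_chebyshev_curve_general (p q : ℕ) (hp : 0 < p)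
    (μ β : ℝ) (hμ : 0 < μ) (hβ : β ≠ 0) (ζ : ℝ) (hζ : Real.sqrt μ ≤ ζ) :
    let Q0 : ℝ := (β / 2) * ((ζ + Real.sqrt (ζ ^ 2 - μ)) ^ ((q : ℝ) / p)
      + (ζ - Real.sqrt (ζ ^ 2 - μ)) ^ ((q : ℝ) / p))
    (Polynomial.Chebyshev.T ℝ (p : ℤ)).eval (Q0 / (β * μ ^ ((q : ℝ) / (2 * p))))
      = (Polynomial.Chebyshev.T ℝ (q : ℤ)).eval (ζ / Real.sqrt μ) := by
  intro Q0
  set θ := arcosh (ζ / √μ) with hθ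
  have hμ_pow : μ ^ ((q : ℝ) / p / 2) = μ ^ ((q : ℝ) / (2 * p)) := by rw [div_div, mul_comm]
  have hQ0 : Q0 / (β * μ ^ ((q : ℝ) / (2 * p))) = cosh ((q / p : ℝ) * θ) := by
    simp only [Q0, add_sqrt_sq_sub_eq_sqrt_mul_exp_arcosh hμ hζ,
      sub_sqrt_sq_sub_eq_sqrt_mul_exp_neg_arcosh hμ hζ, sqrt_mul_exp_rpow hμ.le, hμ_pow,
      cosh_eq, mul_neg, ← hθ]
    field_simp
  have hx : ζ / √μ = cosh θ := (cosh_arcosh ((one_le_div (sqrt_pos.mpr hμ)).mpr hζ)).symm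
  rw [hQ0, hx]
  simpa only [Int.cast_natCast] using
    Polynomial.Chebyshev.T_real_eval_cosh_div_mul p q (mod_cast hp.ne') θ

/-- For positive integers `p, q`, reals `μ > 0`, `β ≠ 0`, and `ζ ≥ √μ`, the
conformal-background disk amplitude
`Q_0(ζ) = (β/2)[(ζ + √(ζ²−μ))^{q/p} + (ζ − √(ζ²−μ))^{q/p}]` satisfies
`T_p(Q_0(ζ)/(β μ^{q/2p})) = T_q(ζ/√μ)`, where `T_n` is the Chebyshev polynomial of the first
kind. -/
theorem disk_amplitude_chebyshev_curve (p q : ℕ) (hp : 0 < p) (hq : 0 < q)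
    (μ β : ℝ) (hμ : 0 < μ) (hβ : β ≠ 0) (ζ : ℝ) (hζ : Real.sqrt μ ≤ ζ) :
    let Q0 : ℝ := (β / 2) * ((ζ + Real.sqrt (ζ ^ 2 - μ)) ^ ((q : ℝ) / p)
      + (ζ - Real.sqrt (ζ ^ 2 - μ)) ^ ((q : ℝ) / p))
    (Polynomial.Chebyshev.T ℝ (p : ℤ)).eval (Q0 / (β * μ ^ ((q : ℝ) / (2 * p))))
      = (Polynomial.Chebyshev.T ℝ (q : ℤ)).eval (ζ / Real.sqrt μ) :=
  disk_amplitude_chebyshev_curve_general p q hp μ β hμ hβ ζ hζ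
end

section
/- Let p, q be positive integers with q ≠ p, let a, b, n be integers, set m = b − a and τ_* = (−(a+b)/p + n/q)·π. Define G(τ) = [cos((q+p)τ_a) − cos((q+p)τ_b)]/(q+p) − [cos((q−p)τ_a) − cos((q−p)τ_b)]/(q−p), where τ_c = τ + 2πc/p. Then the second derivative of G at τ_* equals G″(τ_*) = 4q·sin((q−p)nπ/q)·sin((q−p)mπ/p). -/
/-!
At the saddle point the two shifted arguments are `τ_a = x - y` and `τ_b = x + y` with
`x = nπ/q` and `y = mπ/p`, so by sum-to-product the frequency-`k` term of `G″` is
`-2k sin(kx) sin(ky)`. Because `qx` and `py` are integer multiples of `π`, the sines at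
`k = q + p` and `k = q - p` agree up to sign, and the two terms add up to
`4q sin((q - p)x) sin((q - p)y)`.
-/

open Real

lemma iteratedDeriv_two_cos_mul_add (k c t : ℝ) :
    iteratedDeriv 2 (fun t => cos (k * (t + c))) t = -(k ^ 2 * cos (k * (t + c))) := by
  have harg : ∀ t, HasDerivAt (fun t => k * (t + c)) k t := fun t => by
    simpa using ((hasDerivAt_id t).add_const c).const_mul k
  have hcos_deriv : deriv (fun t => cos (k * (t + c))) = fun t => -k * sin (k * (t + c)) :=
    funext fun t => by rw [((harg t).cos).deriv]; ring
  rw [iteratedDeriv_succ, iteratedDeriv_one, hcos_deriv, ((harg t).sin.const_mul (-k)).deriv]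
  ring

lemma iteratedDeriv_two_cos_sub_cos_div (k A B t : ℝ) :
    iteratedDeriv 2 (fun t => (cos (k * (t + A)) - cos (k * (t + B))) / k) t
      = -2 * k * sin (k * (t + (A + B) / 2)) * sin (k * ((B - A) / 2)) := by
  have hsum : (k * (t + B) + k * (t + A)) / 2 = k * (t + (A + B) / 2) := by ring
  have hdiff : (k * (t + B) - k * (t + A)) / 2 = k * ((B - A) / 2) := by ring
  rw [iteratedDeriv_div_const, iteratedDeriv_fun_sub (by fun_prop) (by fun_prop),
    iteratedDeriv_two_cos_mul_add, iteratedDeriv_two_cos_mul_add, neg_sub_neg, ← mul_sub,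
    cos_sub_cos, hsum, hdiff]
  rcases eq_or_ne k 0 with hk | hk
  · simp [hk]
  · field_simp

lemma two_mode_sin_sin_eq (P Q x y : ℝ) (hx : sin (Q * x) = 0) (hy : sin (P * y) = 0) :
    -2 * (Q + P) * sin ((Q + P) * x) * sin ((Q + P) * y)
        - -2 * (Q - P) * sin ((Q - P) * x) * sin ((Q - P) * y)
      = 4 * Q * sin ((Q - P) * x) * sin ((Q - P) * y) := by
  have hx' : sin ((Q + P) * x) = -sin ((Q - P) * x) := by
    rw [add_mul, sub_mul, sin_add, sin_sub, hx]; ring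
  have hy' : sin ((Q + P) * y) = sin ((Q - P) * y) := by
    rw [add_mul, sub_mul, sin_add, sin_sub, hy]; ring
  rw [hx', hy']
  ring

theorem instanton_action_second_deriv_general (p q : ℕ) (hp : 0 < p) (hq : 0 < q)
    (a b n : ℤ) :
    let m : ℤ := b - a
    let τs : ℝ := (-(((a : ℝ) + b) / p) + (n : ℝ) / q) * π
    iteratedDeriv 2 (fun t : ℝ =>
        (Real.cos (((q : ℝ) + p) * (t + 2 * π * a / p))
          - Real.cos (((q : ℝ) + p) * (t + 2 * π * b / p))) / ((q : ℝ) + p)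
        - (Real.cos (((q : ℝ) - p) * (t + 2 * π * a / p))
          - Real.cos (((q : ℝ) - p) * (t + 2 * π * b / p))) / ((q : ℝ) - p)) τs
      = 4 * (q : ℝ) * Real.sin (((q : ℝ) - p) * n * π / q)
          * Real.sin (((q : ℝ) - p) * m * π / p) := by
  intro m τs
  have hp0 : (p : ℝ) ≠ 0 := by positivity
  have hq0 : (q : ℝ) ≠ 0 := by positivity
  have hmid : τs + (2 * π * a / p + 2 * π * b / p) / 2 = n * π / q := by
    simp only [τs]; field_simp; ring
  have hhalf : (2 * π * b / p - 2 * π * a / p) / 2 = m * π / p := by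
    simp only [m]; push_cast; field_simp
  have hsin_q : sin (q * (n * π / q)) = 0 := by
    rw [mul_div_cancel₀ _ hq0]; exact sin_int_mul_pi n
  have hsin_p : sin (p * (m * π / p)) = 0 := by
    rw [mul_div_cancel₀ _ hp0]; exact sin_int_mul_pi m
  rw [iteratedDeriv_fun_sub (by fun_prop) (by fun_prop), iteratedDeriv_two_cos_sub_cos_div,
    iteratedDeriv_two_cos_sub_cos_div, hmid, hhalf, two_mode_sin_sin_eq _ _ _ _ hsin_q hsin_p]
  simp only [mul_div_assoc, mul_assoc]

/-- For positive integers `p ≠ q` and integers `a, b, n`, let `m = b − a` and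
`τ_* = (−(a+b)/p + n/q)π`.  The function
`G(τ) = [cos((q+p)τ_a) − cos((q+p)τ_b)]/(q+p) − [cos((q−p)τ_a) − cos((q−p)τ_b)]/(q−p)`,
with `τ_c = τ + 2πc/p`, satisfies `G″(τ_*) = 4q sin((q−p)nπ/q) sin((q−p)mπ/p)`. -/
theorem instanton_action_second_deriv (p q : ℕ) (hp : 0 < p) (hq : 0 < q) (hpq : q ≠ p)
    (a b n : ℤ) :
    let m : ℤ := b - a
    let τs : ℝ := (-(((a : ℝ) + b) / p) + (n : ℝ) / q) * π
    iteratedDeriv 2 (fun t : ℝ =>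
        (Real.cos (((q : ℝ) + p) * (t + 2 * π * a / p))
          - Real.cos (((q : ℝ) + p) * (t + 2 * π * b / p))) / ((q : ℝ) + p)
        - (Real.cos (((q : ℝ) - p) * (t + 2 * π * a / p))
          - Real.cos (((q : ℝ) - p) * (t + 2 * π * b / p))) / ((q : ℝ) - p)) τs
      = 4 * (q : ℝ) * Real.sin (((q : ℝ) - p) * n * π / q)
          * Real.sin (((q : ℝ) - p) * m * π / p) :=
  instanton_action_second_deriv_general p q hp hq a b n
end
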